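/- For every k > 0, there exists a TL[#←] formula of depth k+1 that solves the next-token prediction problem for L_{k+3}, but no TL[#←] formula of depth k solves the next-token prediction problem for L_{k+3}. -/

import Mathlib

/-!
Upper bound: in a word of `L_m`, the formula `reach n` of depth `n - 1` holds exactly in the
blocks `n, n + 2, n + 4, …` (counted from `0`): it asks for the letter of the parity of `n` and
for `reach (n - 1)` to have held before. So `reach (k + 2)` recognises the last block of `L_{k+3}`.

Lower bound: consider the word of `L_B` whose block `b` has length `M ^ (B - b)`, for large `M`.
By induction, a term of depth `d` is affine on every block (up to its first `C` positions, and
exactly on the blocks `b ≥ d`) with slopes bounded by `C` and 2-periodic from block `d - 1` on,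
and a formula of depth `d` is constant on every block (up to its first `C` positions, and exactly
on the blocks `b > d`) with block values 2-periodic from block `d` on. The step through `<` works
because the sign of a difference of terms is decided by the first block where its slope is
nonzero, the block lengths shrinking by the factor `M`. A formula of depth `k` thus takes the same
value at the ends of blocks `k` and `k + 2`, while it should reject the first (a prefix with
`k + 1` blocks) and accept the second.
-/

inductive Letter : Type
  | a : Letter
  | b : Letter
deriving DecidableEq

instance : Fintype Letter := ⟨{Letter.a, Letter.b}, fun x => by cases x <;> simp⟩

def aplus : Language Letter := {w | w ≠ [] ∧ ∀ c ∈ w, c = Letter.a}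
def bplus : Language Letter := {w | w ≠ [] ∧ ∀ c ∈ w, c = Letter.b}

def altplus (k : ℕ) : Language Letter :=
  if k % 2 = 0 then (aplus * bplus) ^ (k / 2)
  else (aplus * bplus) ^ (k / 2) * aplus


mutual
  inductive TLFormula (σ : Type) : Type
    | sym : σ → TLFormula σ
    | lt : TLTerm σ → TLTerm σ → TLFormula σ
    | not : TLFormula σ → TLFormula σ
    | and : TLFormula σ → TLFormula σ → TLFormula σ
  inductive TLTerm (σ : Type) : Type
    | countL : TLFormula σ → TLTerm σ
    | add : TLTerm σ → TLTerm σ → TLTerm σ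
    | one : TLTerm σ
end

mutual
  /-- Positions are 0-indexed: `w,i ⊨ φ` is `φ.sat w i` for `0 ≤ i < |w|`. -/
  def TLFormula.sat {σ : Type} [DecidableEq σ] : TLFormula σ → List σ → ℕ → Bool
    | .sym c, w, i => decide (w[i]? = some c)
    | .lt t₁ t₂, w, i => decide (TLTerm.val t₁ w i < TLTerm.val t₂ w i)
    | .not φ, w, i => !(TLFormula.sat φ w i)
    | .and φ₁ φ₂, w, i => TLFormula.sat φ₁ w i && TLFormula.sat φ₂ w i
  def TLTerm.val {σ : Type} [DecidableEq σ] : TLTerm σ → List σ → ℕ → ℕ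
    | .countL φ, w, i => ((List.range (i + 1)).filter (fun j => TLFormula.sat φ w j)).length
    | .add t₁ t₂, w, i => TLTerm.val t₁ w i + TLTerm.val t₂ w i
    | .one, _, _ => 1
end

mutual
  def TLFormula.depth {σ : Type} : TLFormula σ → ℕ
    | .sym _ => 0
    | .lt t₁ t₂ => max (TLTerm.depth t₁) (TLTerm.depth t₂)
    | .not φ => TLFormula.depth φ
    | .and φ₁ φ₂ => max (TLFormula.depth φ₁) (TLFormula.depth φ₂)
  def TLTerm.depth {σ : Type} : TLTerm σ → ℕ
    | .countL φ => TLFormula.depth φ + 1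
    | .add t₁ t₂ => max (TLTerm.depth t₁) (TLTerm.depth t₂)
    | .one => 0
end

def TLFormula.defines {σ : Type} [DecidableEq σ] (φ : TLFormula σ) (L : Set (List σ)) : Prop :=
  ∀ w : List σ, w ≠ [] → (w ∈ L ↔ φ.sat w (w.length - 1) = true)


def SolvesNTP (φ : TLFormula Letter) (k : ℕ) : Prop :=
  ∀ w ∈ altplus k, ∀ i : ℕ, 1 ≤ i → i ≤ w.length →
    (w.take i ∈ altplus k ↔ φ.sat (w.take i) (i - 1) = true)

open Finset Filter

def blockLetter (b : ℕ) : Letter := if b % 2 = 0 then .a else .b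

lemma blockLetter_eq_iff {i j : ℕ} : blockLetter i = blockLetter j ↔ i % 2 = j % 2 := by
  unfold blockLetter
  split_ifs <;> simp <;> omega

lemma blockLetter_add_two (b : ℕ) : blockLetter (b + 2) = blockLetter b :=
  blockLetter_eq_iff.2 (by omega)

def blocks : ℕ → List ℕ → List Letter
  | _, [] => []
  | j, n :: l => List.replicate n (blockLetter j) ++ blocks (j + 1) l

def blockIndex : List ℕ → ℕ → ℕ
  | [], _ => 0
  | n :: l, p => if p < n then 0 else blockIndex l (p - n) + 1

section Blocks

variable {j i p : ℕ} {l : List ℕ}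

lemma blocks_add_two (j : ℕ) (l : List ℕ) : blocks (j + 2) l = blocks j l := by
  induction l generalizing j with
  | nil => rfl
  | cons n l ih => rw [blocks, blocks, blockLetter_add_two, Nat.add_right_comm, ih]

@[simp] lemma length_blocks (j : ℕ) (l : List ℕ) : (blocks j l).length = l.sum := by
  induction l generalizing j with
  | nil => rfl
  | cons n l ih => simp [blocks, ih]

lemma getElem?_blocks (hp : p < l.sum) :
    (blocks j l)[p]? = some (blockLetter (j + blockIndex l p)) := by
  induction l generalizing j p with
  | nil => simp at hp
  | cons n l ih =>
    rw [List.sum_cons] at hp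
    rw [blocks, List.getElem?_append, List.length_replicate, blockIndex]
    split_ifs with h
    · simp [h]
    · rw [ih (by omega), Nat.add_right_comm, Nat.add_assoc]

lemma blockIndex_lt_length (hp : p < l.sum) : blockIndex l p < l.length := by
  induction l generalizing p with
  | nil => simp at hp
  | cons n l ih =>
    rw [List.sum_cons] at hp
    rw [blockIndex]
    split_ifs
    · simp
    · simpa using ih (by omega)

lemma blockIndex_mono (l : List ℕ) : Monotone (blockIndex l) := by
  induction l with
  | nil => exact fun _ _ _ => le_rfl
  | cons n l ih =>
    intro p q hpq
    simp only [blockIndex]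
    split_ifs
    all_goals first | omega | exact Nat.succ_le_succ (ih (by omega))

lemma exists_blockIndex_eq (hl : ∀ n ∈ l, 0 < n) {v : ℕ} (hv : v ≤ blockIndex l p) :
    ∃ q ≤ p, blockIndex l q = v := by
  induction l generalizing p v with
  | nil => exact ⟨0, Nat.zero_le _, by simp_all [blockIndex]⟩
  | cons n l ih =>
    have hn : 0 < n := hl n (by simp)
    rw [blockIndex] at hv
    split_ifs at hv with h
    · exact ⟨p, le_rfl, by simp [blockIndex, h]; omega⟩
    · rcases v with _ | v
      · exact ⟨0, Nat.zero_le _, by simp [blockIndex, hn]⟩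
      · obtain ⟨q, hq, hqv⟩ := ih (fun x hx => hl x (by simp [hx])) (p := p - n) (v := v) (by omega)
        exact ⟨n + q, by omega, by simp [blockIndex, hqv]⟩

lemma blockIndex_sum_take_add {b r : ℕ} (hb : b < l.length) (hr : r < l[b]) :
    blockIndex l ((l.take b).sum + r) = b := by
  induction l generalizing b with
  | nil => simp at hb
  | cons n l ih =>
    rcases b with _ | b
    · simpa [blockIndex] using hr
    · have := ih (b := b) (by simpa using hb) (by simpa using hr)
      simp [blockIndex, Nat.add_assoc, this]

lemma take_blocks (hl : ∀ n ∈ l, 0 < n) (hi : 0 < i) (hil : i ≤ l.sum) :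
    ∃ l' : List ℕ, (∀ n ∈ l', 0 < n) ∧ l'.length = blockIndex l (i - 1) + 1 ∧
      (blocks j l).take i = blocks j l' := by
  induction l generalizing j i with
  | nil => simp at hil; omega
  | cons n l ih =>
    rw [List.sum_cons] at hil
    by_cases hin : i ≤ n
    · refine ⟨[i], by simpa using hi, by simp [blockIndex]; omega, ?_⟩
      simp [blocks, List.take_append, List.take_replicate, hin, Nat.sub_eq_zero_of_le hin]
    · obtain ⟨l', hl', hlen, htake⟩ :=
        ih (j := j + 1) (i := i - n) (fun x hx => hl x (by simp [hx])) (by omega) (by omega)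
      refine ⟨n :: l', ?_, ?_, ?_⟩
      · simpa [hl n (by simp)] using hl'
      · simp [blockIndex, hlen, show ¬ i - 1 < n by omega, Nat.sub_right_comm i 1 n]
      · simp [blocks, List.take_append, htake, show n ≤ i by omega]

lemma replicate_append_inj {α : Type*} {c : α} {n n' : ℕ} {x x' : List α}
    (hx : x.head? ≠ some c) (hx' : x'.head? ≠ some c)
    (h : List.replicate n c ++ x = List.replicate n' c ++ x') : n = n' ∧ x = x' := by
  induction n generalizing n' with
  | zero =>
    cases n' with
    | zero => simpa using h
    | succ m => simp [List.replicate_succ] at h; simp [h] at hx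
  | succ m ih =>
    cases n' with
    | zero => simp [List.replicate_succ] at h; simp [← h] at hx'
    | succ m' =>
      simp only [List.replicate_succ, List.cons_append, List.cons.injEq, true_and] at h
      exact (ih h).imp_left (congrArg _)

lemma head?_blocks_succ_ne (hl : ∀ n ∈ l, 0 < n) (j : ℕ) :
    (blocks (j + 1) l).head? ≠ some (blockLetter j) := by
  rcases l with _ | ⟨_ | n, l⟩
  · simp [blocks]
  · simp at hl
  · simp [blocks, List.replicate_succ, blockLetter_eq_iff]
    omega

lemma blocks_injective {l' : List ℕ} (hl : ∀ n ∈ l, 0 < n) (hl' : ∀ n ∈ l', 0 < n)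
    (h : blocks j l = blocks j l') : l = l' := by
  induction l generalizing j l' with
  | nil =>
    rcases l' with _ | ⟨n, l'⟩
    · rfl
    · have hlen := congrArg List.length h
      have := hl' n (by simp)
      simp at hlen; omega
  | cons n l ih =>
    rcases l' with _ | ⟨n', l'⟩
    · have hlen := congrArg List.length h
      have := hl n (by simp)
      simp at hlen; omega
    · have hl₁ : ∀ x ∈ l, 0 < x := fun x hx => hl x (by simp [hx])
      have hl₁' : ∀ x ∈ l', 0 < x := fun x hx => hl' x (by simp [hx])
      obtain ⟨rfl, htail⟩ := replicate_append_inj (head?_blocks_succ_ne hl₁ j)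
        (head?_blocks_succ_ne hl₁' j) h
      rw [ih hl₁ hl₁' htail]

end Blocks

lemma ne_nil_and_forall_mem_eq_iff {c : Letter} {w : List Letter} :
    (w ≠ [] ∧ ∀ x ∈ w, x = c) ↔ ∃ n, 0 < n ∧ w = List.replicate n c := by
  constructor
  · rintro ⟨hw, hc⟩
    exact ⟨w.length, List.length_pos_iff.2 hw, List.eq_replicate_iff.2 ⟨rfl, hc⟩⟩
  · rintro ⟨n, hn, rfl⟩
    exact ⟨by simp; omega, fun x => List.eq_of_mem_replicate⟩

lemma mem_pow_mul_iff {T : Language Letter} {m : ℕ}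
    (hT : ∀ w, w ∈ T ↔ ∃ l : List ℕ, (∀ n ∈ l, 0 < n) ∧ l.length = m ∧ w = blocks 0 l)
    (q : ℕ) (w : List Letter) :
    w ∈ (aplus * bplus) ^ q * T ↔
      ∃ l : List ℕ, (∀ n ∈ l, 0 < n) ∧ l.length = 2 * q + m ∧ w = blocks 0 l := by
  induction q generalizing w with
  | zero => simpa using hT w
  | succ q ih =>
    have hcons (n n' : ℕ) (l : List ℕ) : blocks 0 (n :: n' :: l) =
        List.replicate n .a ++ List.replicate n' .b ++ blocks 0 l := by
      simp [blocks, ← blocks_add_two 0 l, blockLetter]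
    rw [pow_succ', mul_assoc]
    simp only [Language.mem_mul, ih]
    constructor
    · rintro ⟨_, ⟨x, hx, y, hy, rfl⟩, _, ⟨l, hl, hlen, rfl⟩, rfl⟩
      obtain ⟨n, hn, rfl⟩ := ne_nil_and_forall_mem_eq_iff.1 hx
      obtain ⟨n', hn', rfl⟩ := ne_nil_and_forall_mem_eq_iff.1 hy
      refine ⟨n :: n' :: l, ?_, by simp [hlen]; ring, (hcons n n' l).symm⟩
      simp only [List.mem_cons]
      rintro x (rfl | rfl | hx) <;> first | assumption | exact hl x hx
    · rintro ⟨_ | ⟨n, _ | ⟨n', l⟩⟩, hl, hlen, rfl⟩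
      · simp at hlen; omega
      · simp at hlen; omega
      · refine ⟨_, ⟨_, ne_nil_and_forall_mem_eq_iff.2 ⟨n, hl n (by simp), rfl⟩,
          _, ne_nil_and_forall_mem_eq_iff.2 ⟨n', hl n' (by simp), rfl⟩, rfl⟩,
          _, ⟨l, fun x hx => hl x (by simp [hx]), ?_, rfl⟩, (hcons n n' l).symm⟩
        simp at hlen; omega

lemma mem_altplus {m : ℕ} {w : List Letter} :
    w ∈ altplus m ↔ ∃ l : List ℕ, (∀ n ∈ l, 0 < n) ∧ l.length = m ∧ w = blocks 0 l := by
  unfold altplus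
  split_ifs with hm
  · rw [← mul_one ((aplus * bplus) ^ (m / 2)), mem_pow_mul_iff (m := 0)]
    · simp only [add_zero, Nat.mul_div_cancel' (Nat.dvd_of_mod_eq_zero hm)]
    · intro w
      simp only [Language.mem_one, List.length_eq_zero_iff]
      exact ⟨fun h => ⟨[], by simp, rfl, h⟩, fun ⟨l, _, hl, hw⟩ => by simp [hw, hl, blocks]⟩
  · rw [mem_pow_mul_iff (m := 1)]
    · rw [show 2 * (m / 2) + 1 = m by omega]
    · intro w
      refine ne_nil_and_forall_mem_eq_iff.trans ⟨fun ⟨n, hn, hw⟩ => ⟨[n], by simpa, rfl, ?_⟩, ?_⟩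
      · simp [hw, blocks, blockLetter]
      · rintro ⟨_ | ⟨n, _ | _⟩, hl, hlen, rfl⟩ <;> simp at hlen
        exact ⟨n, hl n (by simp), by simp [blocks, blockLetter]⟩

lemma eq_of_mem_altplus {m m' : ℕ} {w : List Letter} (h : w ∈ altplus m) (h' : w ∈ altplus m') :
    m = m' := by
  obtain ⟨l, hl, rfl, rfl⟩ := mem_altplus.1 h
  obtain ⟨l', hl', rfl, hw⟩ := mem_altplus.1 h'
  rw [blocks_injective hl hl' hw]

lemma take_blocks_mem_altplus {l : List ℕ} {i : ℕ} (hl : ∀ n ∈ l, 0 < n) (hi : 0 < i)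
    (hil : i ≤ l.sum) : (blocks 0 l).take i ∈ altplus (blockIndex l (i - 1) + 1) := by
  obtain ⟨l', hl', hlen, htake⟩ := take_blocks (j := 0) hl hi hil
  exact mem_altplus.2 ⟨l', hl', hlen, htake⟩

mutual

theorem TLFormula.sat_take {σ : Type} [DecidableEq σ] (φ : TLFormula σ) (w : List σ) {n i : ℕ}
    (h : i < n) : φ.sat (w.take n) i = φ.sat w i := by
  match φ with
  | .sym c => simp [TLFormula.sat, h]
  | .lt t₁ t₂ => simp only [TLFormula.sat, t₁.val_take w h, t₂.val_take w h]
  | .not ψ => simp only [TLFormula.sat, ψ.sat_take w h]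
  | .and ψ₁ ψ₂ => simp only [TLFormula.sat, ψ₁.sat_take w h, ψ₂.sat_take w h]

theorem TLTerm.val_take {σ : Type} [DecidableEq σ] (t : TLTerm σ) (w : List σ) {n i : ℕ}
    (h : i < n) : t.val (w.take n) i = t.val w i := by
  match t with
  | .countL φ =>
    simp only [TLTerm.val]
    congr 1
    exact List.filter_congr fun j hj => φ.sat_take w (by simp at hj; omega)
  | .add t₁ t₂ => simp only [TLTerm.val, t₁.val_take w h, t₂.val_take w h]
  | .one => rfl

end

lemma TLTerm.val_countL {σ : Type} [DecidableEq σ] (φ : TLFormula σ) (w : List σ) (i : ℕ) :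
    (TLTerm.countL φ).val w i = Nat.count (fun j => φ.sat w j) (i + 1) := by
  simp [TLTerm.val, Nat.count, List.countP_eq_length_filter]

def TLFormula.once {σ : Type} (φ : TLFormula σ) : TLFormula σ :=
  .not (.lt (.countL φ) .one)

lemma TLFormula.depth_once {σ : Type} (φ : TLFormula σ) : φ.once.depth = φ.depth + 1 := by
  simp [TLFormula.once, TLFormula.depth, TLTerm.depth]

lemma TLFormula.sat_once {σ : Type} [DecidableEq σ] (φ : TLFormula σ) (w : List σ) (i : ℕ) :
    φ.once.sat w i = true ↔ ∃ j ≤ i, φ.sat w j = true := by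
  simp only [TLFormula.once, TLFormula.sat, TLTerm.val_countL]
  simp only [TLTerm.val, Bool.not_eq_true', decide_eq_false_iff_not, Nat.lt_one_iff,
    Nat.count_ne_iff_exists, Order.lt_add_one_iff]

lemma solvesNTP_iff {φ : TLFormula Letter} {k : ℕ} :
    SolvesNTP φ k ↔ ∀ w ∈ altplus k, ∀ i : ℕ, 1 ≤ i → i ≤ w.length →
      (w.take i ∈ altplus k ↔ φ.sat w (i - 1) = true) := by
  refine forall₂_congr fun w _ => forall₃_congr fun i hi _ => ?_
  rw [φ.sat_take w (by omega)]

def reach : ℕ → TLFormula Letter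
  | 0 => .sym (blockLetter 0)
  | 1 => .sym (blockLetter 1)
  | n + 2 => .and (.sym (blockLetter n)) (reach (n + 1)).once

lemma depth_reach (n : ℕ) : (reach (n + 1)).depth = n := by
  induction n with
  | zero => rfl
  | succ n ih => simp [reach, TLFormula.depth, TLFormula.depth_once, ih]

lemma sat_sym_blocks {l : List ℕ} {p : ℕ} (hp : p < l.sum) (n : ℕ) :
    (TLFormula.sym (blockLetter n)).sat (blocks 0 l) p = decide (blockIndex l p % 2 = n % 2) := by
  simp [TLFormula.sat, getElem?_blocks hp, blockLetter_eq_iff]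

lemma sat_reach {l : List ℕ} (hl : ∀ n ∈ l, 0 < n) {p : ℕ} (hp : p < l.sum) (n : ℕ) :
    (reach n).sat (blocks 0 l) p = decide (n ≤ blockIndex l p ∧ blockIndex l p % 2 = n % 2) := by
  induction n using Nat.strong_induction_on generalizing p with
  | _ n ih =>
  match n with
  | 0 => simp [reach, sat_sym_blocks hp]
  | 1 => simp [reach, sat_sym_blocks hp]; omega
  | n + 2 =>
    have honce : (∃ q ≤ p, (reach (n + 1)).sat (blocks 0 l) q = true) ↔ n + 1 ≤ blockIndex l p := by
      constructor
      · rintro ⟨q, hq, hsat⟩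
        rw [ih (n + 1) (by omega) (by omega)] at hsat
        have := blockIndex_mono l hq
        simp at hsat; omega
      · intro hn
        obtain ⟨q, hq, hqn⟩ := exists_blockIndex_eq hl hn
        exact ⟨q, hq, by rw [ih (n + 1) (by omega) (by omega)]; simp [hqn]⟩
    rw [Bool.eq_iff_iff]
    simp only [reach, TLFormula.sat, Bool.and_eq_true, TLFormula.sat_once, honce,
      getElem?_blocks hp, zero_add, Option.some.injEq, blockLetter_eq_iff, decide_eq_true_eq]
    omega

theorem reach_solvesNTP (m : ℕ) : SolvesNTP (reach m) (m + 1) := by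
  rw [solvesNTP_iff]
  intro w hw i hi hiw
  obtain ⟨l, hl, hlen, rfl⟩ := mem_altplus.1 hw
  rw [length_blocks] at hiw
  have hlt := blockIndex_lt_length (l := l) (p := i - 1) (by omega)
  have hmem := take_blocks_mem_altplus hl hi hiw
  rw [sat_reach hl (by omega)]
  constructor
  · intro h
    have := eq_of_mem_altplus h hmem
    simp; omega
  · intro h
    convert hmem using 2
    simp at h; omega

def blockLen (B M b : ℕ) : ℕ := M ^ (B - b)

def blockStart (B M b : ℕ) : ℕ := ∑ i ∈ range b, blockLen B M i

def testWord (B M : ℕ) : List Letter := blocks 0 ((List.range B).map (blockLen B M))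

section TestWord

variable {B M b r : ℕ}

lemma blockLen_pos (hM : 0 < M) (b : ℕ) : 0 < blockLen B M b := Nat.pow_pos hM

lemma le_blockLen (hb : b < B) : M ≤ blockLen B M b := Nat.le_self_pow (by omega) M

lemma blockLen_eq_mul (hb : b < B) : blockLen B M b = M * blockLen B M (b + 1) := by
  rw [blockLen, blockLen, ← pow_succ', show B - (b + 1) + 1 = B - b by omega]

lemma blockLen_antitone (hM : 0 < M) : Antitone (blockLen B M) :=
  fun _ _ h => Nat.pow_le_pow_right hM (by omega)

lemma blockStart_succ (b : ℕ) : blockStart B M (b + 1) = blockStart B M b + blockLen B M b :=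
  sum_range_succ _ _

lemma blockStart_mono : Monotone (blockStart B M) :=
  fun _ _ h => sum_le_sum_of_subset (range_subset_range.2 h)

lemma sum_take_blockLens (hb : b ≤ B) :
    (((List.range B).map (blockLen B M)).take b).sum = blockStart B M b := by
  rw [← List.map_take, List.take_range, min_eq_left hb, blockStart]
  induction b with
  | zero => rfl
  | succ b ih => rw [List.sum_range_succ, sum_range_succ, ih (by omega)]

lemma blockLens_pos (hM : 0 < M) : ∀ n ∈ (List.range B).map (blockLen B M), 0 < n := by
  simpa using fun b _ => blockLen_pos hM b

lemma length_testWord : (testWord B M).length = blockStart B M B := by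
  rw [testWord, length_blocks, ← sum_take_blockLens le_rfl, List.take_of_length_le (by simp)]

lemma blockIndex_testWord (hb : b < B) (hr : r < blockLen B M b) :
    blockIndex ((List.range B).map (blockLen B M)) (blockStart B M b + r) = b := by
  rw [← sum_take_blockLens hb.le]
  exact blockIndex_sum_take_add (by simpa) (by simpa)

lemma lt_length_testWord (hb : b < B) (hr : r < blockLen B M b) :
    blockStart B M b + r < (testWord B M).length := by
  have := blockStart_mono (B := B) (M := M) (show b + 1 ≤ B from hb)
  rw [blockStart_succ] at this
  rw [length_testWord]
  omega

lemma getElem?_testWord (hb : b < B) (hr : r < blockLen B M b) :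
    (testWord B M)[blockStart B M b + r]? = some (blockLetter b) := by
  have hlt := lt_length_testWord hb hr
  rw [testWord, length_blocks] at hlt
  rw [testWord, getElem?_blocks hlt, blockIndex_testWord hb hr, zero_add]

lemma testWord_mem_altplus (hM : 0 < M) : testWord B M ∈ altplus B :=
  mem_altplus.2 ⟨_, blockLens_pos hM, by simp, rfl⟩

lemma take_testWord_mem_altplus (hM : 0 < M) (hb : b < B) :
    (testWord B M).take (blockStart B M (b + 1)) ∈ altplus (b + 1) := by
  have hN := blockLen_pos (B := B) hM b
  have hlen := blockStart_mono (B := B) (M := M) (show b + 1 ≤ B from hb)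
  rw [← length_testWord, testWord, length_blocks] at hlen
  have hmem := take_blocks_mem_altplus (blockLens_pos hM) (i := blockStart B M (b + 1))
    (by rw [blockStart_succ]; omega) hlen
  rw [blockStart_succ, show blockStart B M b + blockLen B M b - 1
    = blockStart B M b + (blockLen B M b - 1) by omega,
    blockIndex_testWord hb (Nat.sub_lt hN one_pos)] at hmem
  rwa [blockStart_succ]

end TestWord

lemma lt_zero_iff_of_abs_sub_lt {x y : ℤ} (h : |x - y| < |y|) : x < 0 ↔ y < 0 := by
  rcases abs_lt.1 h with ⟨h₁, h₂⟩
  rcases le_or_gt 0 y with hy | hy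
  · rw [abs_of_nonneg hy] at h₁; omega
  · rw [abs_of_neg hy] at h₂; omega

lemma exists_first_ne_zero (e : ℕ → ℤ) (B : ℕ) :
    ∃ i₀, (∀ i < i₀, e i = 0) ∧ (i₀ < B → e i₀ ≠ 0) := by
  classical
  have hex : ∃ i, B ≤ i ∨ e i ≠ 0 := ⟨B, .inl le_rfl⟩
  refine ⟨Nat.find hex, fun i hi => ?_, fun hlt => ?_⟩
  · have := Nat.find_min hex hi
    push Not at this
    exact this.2
  · exact (Nat.find_spec hex).resolve_left (by omega)

lemma count_add_of_forall_eq {f : ℕ → Bool} {v : Bool} {s lo hi n : ℕ}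
    (h : ∀ j, lo ≤ j → j < hi → f (s + j) = v) (hlo : lo ≤ n) (hn : n ≤ hi) :
    (Nat.count (fun j => f j) (s + n) : ℤ) =
      Nat.count (fun j => f j) (s + lo) + v.toNat * ((n : ℤ) - lo) := by
  obtain ⟨m, rfl⟩ := Nat.exists_eq_add_of_le hlo
  rw [← Nat.add_assoc, Nat.count_add]
  have hv : ∀ k < m, f (s + lo + k) = v := fun k hk => by
    rw [Nat.add_assoc]; exact h _ (by omega) (by omega)
  have hm : Nat.count (fun k => f (s + lo + k) = true) m = v.toNat * m := by
    cases v
    · simpa using Nat.count_of_forall_not fun k hk => by simp [hv k hk]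
    · simpa using Nat.count_of_forall fun k hk => by simp [hv k hk]
  rw [hm]; push_cast; ring

lemma abs_count_add_sub_le (p : ℕ → Prop) [DecidablePred p] (s n : ℕ) (v : Bool) :
    |(Nat.count p (s + n) : ℤ) - Nat.count p s - v.toNat * n| ≤ n := by
  have h₁ : (Nat.count p s : ℤ) ≤ Nat.count p (s + n) := by
    exact_mod_cast Nat.count_monotone _ (Nat.le_add_right _ _)
  have h₂ : (Nat.count p (s + n) : ℤ) ≤ Nat.count p s + n := by
    have := Nat.count_le (fun k => p (s + k)) (n := n)
    rw [Nat.count_add]; push_cast; exact_mod_cast Nat.add_le_add_left this _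
  have h₃ : (v.toNat : ℤ) ≤ 1 := by exact_mod_cast Bool.toNat_le v
  rw [abs_le]; constructor <;> nlinarith

lemma abs_sub_sum_le_of_abs_sub_le {x y : ℕ → ℤ} {c : ℤ} {b : ℕ} (h₀ : x 0 = 0)
    (h : ∀ i < b, |x (i + 1) - x i - y i| ≤ c) : |x b - ∑ i ∈ range b, y i| ≤ b * c := by
  induction b with
  | zero => simp [h₀]
  | succ b ih =>
    calc |x (b + 1) - ∑ i ∈ range (b + 1), y i|
        = |(x b - ∑ i ∈ range b, y i) + (x (b + 1) - x b - y b)| := by rw [sum_range_succ]; ring_nf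
      _ ≤ b * c + c := (abs_add_le _ _).trans
          (add_le_add (ih fun i hi => h i (by omega)) (h b (by omega)))
      _ = ((b + 1 : ℕ) : ℤ) * c := by push_cast; ring

section Profiles

variable {B M C d : ℕ}

structure IsTermProfile (B M C d : ℕ) (v ε a : ℕ → ℤ) : Prop where
  abs_slope_le : ∀ b, |ε b| ≤ C
  slope_eq_zero : d = 0 → ∀ b, ε b = 0
  slope_add_two : ∀ b, b + 2 < B → d ≤ b + 1 → ε (b + 2) = ε b
  eq_of_le : ∀ b < B, ∀ r, C ≤ r → r < blockLen B M b →
    v (blockStart B M b + r) = a b + ε b * (r + 1)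
  eq_of_depth_le : ∀ b < B, d ≤ b → ∀ r < blockLen B M b,
    v (blockStart B M b + r) = a b + ε b * (r + 1)
  abs_sub_le : ∀ b ≤ B, |a b - ∑ i ∈ range b, ε i * blockLen B M i| ≤ C
  offset_succ : ∀ b, b + 1 < B → d ≤ b → a (b + 1) = a b + ε b * blockLen B M b

structure IsFormulaProfile (B M C d : ℕ) (f E : ℕ → Bool) : Prop where
  eq_of_le : ∀ b < B, ∀ r, C ≤ r → r < blockLen B M b → f (blockStart B M b + r) = E b
  eq_of_depth_lt : ∀ b < B, d < b → ∀ r < blockLen B M b, f (blockStart B M b + r) = E b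
  add_two : ∀ b, b + 2 < B → d ≤ b → E (b + 2) = E b

namespace IsTermProfile

variable {v ε a : ℕ → ℤ}

lemma mono (h : IsTermProfile B M C d v ε a) {C' d' : ℕ} (hC : C ≤ C') (hd : d ≤ d') :
    IsTermProfile B M C' d' v ε a where
  abs_slope_le b := (h.abs_slope_le b).trans (by exact_mod_cast hC)
  slope_eq_zero hd' := h.slope_eq_zero (by omega)
  slope_add_two b hb hdb := h.slope_add_two b hb (by omega)
  eq_of_le b hb r hr := h.eq_of_le b hb r (by omega)
  eq_of_depth_le b hb hdb := h.eq_of_depth_le b hb (by omega)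
  abs_sub_le b hb := (h.abs_sub_le b hb).trans (by exact_mod_cast hC)
  offset_succ b hb hdb := h.offset_succ b hb (by omega)

lemma add {C₁ C₂ : ℕ} {v₁ ε₁ a₁ v₂ ε₂ a₂ : ℕ → ℤ} (h₁ : IsTermProfile B M C₁ d v₁ ε₁ a₁)
    (h₂ : IsTermProfile B M C₂ d v₂ ε₂ a₂) :
    IsTermProfile B M (C₁ + C₂) d (v₁ + v₂) (ε₁ + ε₂) (a₁ + a₂) where
  abs_slope_le b := by
    have := h₁.abs_slope_le b; have := h₂.abs_slope_le b
    simp only [Pi.add_apply]; push_cast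
    exact (abs_add_le _ _).trans (by linarith)
  slope_eq_zero hd b := by simp [h₁.slope_eq_zero hd b, h₂.slope_eq_zero hd b]
  slope_add_two b hb hdb := by simp [h₁.slope_add_two b hb hdb, h₂.slope_add_two b hb hdb]
  eq_of_le b hb r hr hrb := by
    simp only [Pi.add_apply, h₁.eq_of_le b hb r (by omega) hrb, h₂.eq_of_le b hb r (by omega) hrb]
    ring
  eq_of_depth_le b hb hdb r hrb := by
    simp only [Pi.add_apply, h₁.eq_of_depth_le b hb hdb r hrb, h₂.eq_of_depth_le b hb hdb r hrb]
    ring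
  abs_sub_le b hb := by
    have hsplit : (a₁ + a₂) b - ∑ i ∈ range b, (ε₁ + ε₂) i * blockLen B M i =
        (a₁ b - ∑ i ∈ range b, ε₁ i * blockLen B M i) +
          (a₂ b - ∑ i ∈ range b, ε₂ i * blockLen B M i) := by
      simp only [Pi.add_apply, add_mul, sum_add_distrib]; ring
    rw [hsplit]; push_cast
    exact (abs_add_le _ _).trans (add_le_add (h₁.abs_sub_le b hb) (h₂.abs_sub_le b hb))
  offset_succ b hb hdb := by
    simp only [Pi.add_apply, h₁.offset_succ b hb hdb, h₂.offset_succ b hb hdb]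
    ring

lemma neg (h : IsTermProfile B M C d v ε a) : IsTermProfile B M C d (-v) (-ε) (-a) where
  abs_slope_le b := by simpa using h.abs_slope_le b
  slope_eq_zero hd b := by simp [h.slope_eq_zero hd b]
  slope_add_two b hb hdb := by simp [h.slope_add_two b hb hdb]
  eq_of_le b hb r hr hrb := by simp [h.eq_of_le b hb r hr hrb]; ring
  eq_of_depth_le b hb hdb r hrb := by simp [h.eq_of_depth_le b hb hdb r hrb]; ring
  abs_sub_le b hb := by
    have hneg : (-a) b - ∑ i ∈ range b, (-ε) i * blockLen B M i =
        -(a b - ∑ i ∈ range b, ε i * blockLen B M i) := by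
      simp only [Pi.neg_apply, neg_mul, sum_neg_distrib]; ring
    rw [hneg, abs_neg]
    exact h.abs_sub_le b hb
  offset_succ b hb hdb := by simp [h.offset_succ b hb hdb]; ring

lemma slope_eq_zero_of_lt (h : IsTermProfile B M C d v ε a) {j : ℕ} (hj : j < B) (hdj : d < j)
    (hzero : ∀ i < j, ε i = 0) : ε j = 0 := by
  rcases Nat.eq_zero_or_pos d with hd | hd
  · exact h.slope_eq_zero hd j
  · obtain ⟨i, rfl⟩ : ∃ i, j = i + 2 := ⟨j - 2, by omega⟩
    rw [h.slope_add_two i hj (by omega), hzero i (by omega)]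

end IsTermProfile

lemma mul_neg_iff_of_pos {x y : ℤ} (hy : 0 < y) : x * y < 0 ↔ x < 0 := by
  simp [mul_neg_iff, hy, not_lt.2 hy.le]

lemma abs_sum_Ico_mul_blockLen_le {ε : ℕ → ℤ} {c b i₀ : ℕ} (hM : 0 < M) (hε : ∀ i, |ε i| ≤ c)
    (hb : b ≤ B) : |∑ i ∈ Ico (i₀ + 1) b, ε i * blockLen B M i| ≤ c * B * blockLen B M (i₀ + 1) :=
  calc |∑ i ∈ Ico (i₀ + 1) b, ε i * blockLen B M i|
      ≤ ∑ i ∈ Ico (i₀ + 1) b, |ε i * blockLen B M i| := abs_sum_le_sum_abs _ _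
    _ ≤ ∑ _i ∈ Ico (i₀ + 1) b, (c * blockLen B M (i₀ + 1) : ℤ) := sum_le_sum fun i hi => by
        rw [abs_mul, Nat.abs_cast]
        exact mul_le_mul (hε i) (by exact_mod_cast blockLen_antitone hM (mem_Ico.1 hi).1)
          (by positivity) (by positivity)
    _ = (b - (i₀ + 1) : ℕ) * (c * blockLen B M (i₀ + 1)) := by
        rw [sum_const, Nat.card_Ico, nsmul_eq_mul]
    _ ≤ c * B * blockLen B M (i₀ + 1) := by
        rw [mul_comm (c : ℤ) B, mul_assoc]
        exact mul_le_mul_of_nonneg_right (by exact_mod_cast (by omega : b - (i₀ + 1) ≤ B))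
          (by positivity)

-- The block lengths drop by the factor `M`, so the first nonzero slope dominates.
lemma lt_zero_iff_of_abs_sub_sum_le {ε : ℕ → ℤ} {c b i₀ : ℕ} (hM : c * (B + 2) < M)
    (hε : ∀ i, |ε i| ≤ c) (hb : b ≤ B) (hi₀ : i₀ < b) (hzero : ∀ i < i₀, ε i = 0)
    (hne : ε i₀ ≠ 0) {x : ℤ}
    (hx : |x - ∑ i ∈ range b, ε i * blockLen B M i| ≤ 2 * c * blockLen B M (i₀ + 1)) :
    x < 0 ↔ ε i₀ < 0 := by
  have hM0 : 0 < M := lt_of_le_of_lt (Nat.zero_le _) hM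
  set N := blockLen B M
  have hsplit : ∑ i ∈ range b, ε i * N i = ε i₀ * N i₀ + ∑ i ∈ Ico (i₀ + 1) b, ε i * N i := by
    rw [← sum_range_add_sum_Ico _ (show i₀ + 1 ≤ b by omega), sum_range_succ,
      sum_eq_zero fun i hi => by rw [hzero i (mem_range.1 hi), zero_mul], zero_add]
  have htail : |∑ i ∈ Ico (i₀ + 1) b, ε i * N i| ≤ c * B * N (i₀ + 1) :=
    abs_sum_Ico_mul_blockLen_le hM0 hε hb
  have hN : (N i₀ : ℤ) = M * N (i₀ + 1) := by exact_mod_cast blockLen_eq_mul (by omega)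
  have hpos : (0 : ℤ) < N (i₀ + 1) := by exact_mod_cast blockLen_pos hM0 _
  have hMz : (c : ℤ) * (B + 2) + 1 ≤ M := by exact_mod_cast hM
  have hdom : |x - ε i₀ * N i₀| < |ε i₀ * N i₀| := by
    have h₁ : |x - ε i₀ * N i₀| ≤ |x - ∑ i ∈ range b, ε i * N i| +
        |∑ i ∈ Ico (i₀ + 1) b, ε i * N i| := by
      rw [hsplit, show x - ε i₀ * N i₀ = (x - (ε i₀ * N i₀ + ∑ i ∈ Ico (i₀ + 1) b, ε i * N i)) +
        ∑ i ∈ Ico (i₀ + 1) b, ε i * N i by ring]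
      exact abs_add_le _ _
    have h₂ : (N i₀ : ℤ) ≤ |ε i₀ * N i₀| := by
      rw [abs_mul, Nat.abs_cast]; exact le_mul_of_one_le_left (by positivity) (Int.one_le_abs hne)
    nlinarith
  rw [lt_zero_iff_of_abs_sub_lt hdom, mul_neg_iff_of_pos (by rw [hN]; positivity)]

namespace IsFormulaProfile

variable {f E : ℕ → Bool}

lemma mono (h : IsFormulaProfile B M C d f E) {C' d' : ℕ} (hC : C ≤ C') (hd : d ≤ d') :
    IsFormulaProfile B M C' d' f E where
  eq_of_le b hb r hr := h.eq_of_le b hb r (by omega)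
  eq_of_depth_lt b hb hdb := h.eq_of_depth_lt b hb (by omega)
  add_two b hb hdb := h.add_two b hb (by omega)

lemma not (h : IsFormulaProfile B M C d f E) :
    IsFormulaProfile B M C d (fun p => !f p) (fun b => !E b) where
  eq_of_le b hb r hr hrb := by rw [h.eq_of_le b hb r hr hrb]
  eq_of_depth_lt b hb hdb r hrb := by rw [h.eq_of_depth_lt b hb hdb r hrb]
  add_two b hb hdb := by rw [h.add_two b hb hdb]

lemma and {f₁ E₁ f₂ E₂ : ℕ → Bool} (h₁ : IsFormulaProfile B M C d f₁ E₁)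
    (h₂ : IsFormulaProfile B M C d f₂ E₂) :
    IsFormulaProfile B M C d (fun p => f₁ p && f₂ p) (fun b => E₁ b && E₂ b) where
  eq_of_le b hb r hr hrb := by rw [h₁.eq_of_le b hb r hr hrb, h₂.eq_of_le b hb r hr hrb]
  eq_of_depth_lt b hb hdb r hrb := by
    rw [h₁.eq_of_depth_lt b hb hdb r hrb, h₂.eq_of_depth_lt b hb hdb r hrb]
  add_two b hb hdb := by rw [h₁.add_two b hb hdb, h₂.add_two b hb hdb]

lemma count_eq_of_le (h : IsFormulaProfile B M C d f E) {b n : ℕ} (hb : b < B) (hn : C ≤ n)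
    (hnb : n ≤ blockLen B M b) :
    (Nat.count (fun j => f j) (blockStart B M b + n) : ℤ) =
      Nat.count (fun j => f j) (blockStart B M b + C) + (E b).toNat * ((n : ℤ) - C) :=
  count_add_of_forall_eq (fun j hj₁ hj₂ => h.eq_of_le b hb j hj₁ hj₂) hn hnb

lemma count_eq_of_depth_lt (h : IsFormulaProfile B M C d f E) {b n : ℕ} (hb : b < B)
    (hdb : d < b) (hnb : n ≤ blockLen B M b) :
    (Nat.count (fun j => f j) (blockStart B M b + n) : ℤ) =
      Nat.count (fun j => f j) (blockStart B M b) + (E b).toNat * n := by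
  simpa using count_add_of_forall_eq (lo := 0) (fun j _ hj => h.eq_of_depth_lt b hb hdb j hj)
    (Nat.zero_le n) hnb

lemma abs_count_sub_sum_le (h : IsFormulaProfile B M C d f E) (hCM : C ≤ M) {b : ℕ}
    (hb : b ≤ B) :
    |(Nat.count (fun j => f j) (blockStart B M b) : ℤ) -
      ∑ i ∈ range b, ((E i).toNat : ℤ) * blockLen B M i| ≤ b * C :=
  abs_sub_sum_le_of_abs_sub_le (x := fun b => (Nat.count (fun j => f j) (blockStart B M b) : ℤ))
    (by simp [blockStart]) fun i hi => by
    rw [blockStart_succ, h.count_eq_of_le (by omega) (hCM.trans (le_blockLen (by omega))) le_rfl]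
    convert abs_count_add_sub_le (fun j => f j = true) (blockStart B M i) C (E i) using 2
    ring

lemma count (h : IsFormulaProfile B M C d f E) (hCM : C ≤ M) :
    ∃ ε a, IsTermProfile B M ((B + 1) * (C + 1)) (d + 1)
      (fun p => Nat.count (fun j => f j) (p + 1)) ε a := by
  have hC : C + 1 ≤ (B + 1) * (C + 1) := Nat.le_mul_of_pos_left _ (by omega)
  have hoffset : ∀ b < B, d < b → (Nat.count (fun j => f j) (blockStart B M b + C) : ℤ) -
      (E b).toNat * C = Nat.count (fun j => f j) (blockStart B M b) := fun b hb hdb => by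
    rw [h.count_eq_of_depth_lt hb hdb (hCM.trans (le_blockLen hb))]; ring
  refine ⟨fun b => (E b).toNat,
    fun b => Nat.count (fun j => f j) (blockStart B M b + C) - (E b).toNat * C, {
      abs_slope_le := fun b => by
        rw [Nat.abs_cast]
        exact_mod_cast (Bool.toNat_le _).trans (by omega)
      slope_eq_zero := fun hd => absurd hd (Nat.succ_ne_zero d)
      slope_add_two := fun b hb hdb => by rw [h.add_two b hb (by omega)]
      eq_of_le := fun b hb r hr hrb => ?_
      eq_of_depth_le := fun b hb hdb r hrb => ?_
      abs_sub_le := fun b hb => ?_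
      offset_succ := fun b hb hdb => ?_ }⟩
  · show (Nat.count _ (blockStart B M b + (r + 1)) : ℤ) = _
    rw [h.count_eq_of_le hb (by omega) hrb]; push_cast; ring
  · show (Nat.count _ (blockStart B M b + (r + 1)) : ℤ) = _
    rw [h.count_eq_of_depth_lt hb (by omega) hrb, hoffset b hb (by omega)]; push_cast; ring
  · have hbC : (b : ℤ) * C + C ≤ ((B + 1) * (C + 1) : ℕ) := by
      push_cast; nlinarith [(by exact_mod_cast hb : (b : ℤ) ≤ B)]
    have h₁ := abs_count_add_sub_le (fun j => f j = true) (blockStart B M b) C (E b)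
    calc _ = |((Nat.count (fun j => f j) (blockStart B M b + C) : ℤ) -
            Nat.count (fun j => f j) (blockStart B M b) - (E b).toNat * C) +
          ((Nat.count (fun j => f j) (blockStart B M b) : ℤ) -
            ∑ i ∈ range b, ((E i).toNat : ℤ) * blockLen B M i)| := by ring_nf
      _ ≤ C + b * C := (abs_add_le _ _).trans (add_le_add h₁ (h.abs_count_sub_sum_le hCM hb))
      _ ≤ _ := by linarith
  · show (Nat.count _ (blockStart B M (b + 1) + C) : ℤ) - _ = _
    rw [hoffset b (by omega) (by omega), hoffset (b + 1) hb (by omega), blockStart_succ,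
      h.count_eq_of_depth_lt (by omega) (by omega) le_rfl]

end IsFormulaProfile

namespace IsTermProfile

variable {v ε a : ℕ → ℤ}

lemma lt_zero_iff (h : IsTermProfile B M C d v ε a) (hM : C * (B + 2) < M) {i₀ b r : ℕ}
    (hzero : ∀ i < i₀, ε i = 0) (hne : i₀ < B → ε i₀ ≠ 0) (hb : b < B)
    (hrb : r < blockLen B M b) (hv : v (blockStart B M b + r) = a b + ε b * (r + 1))
    (hC : i₀ = b → C ≤ r) :
    v (blockStart B M b + r) < 0 ↔ if i₀ ≤ b then ε i₀ < 0 else a b < 0 := by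
  have hM0 : 0 < M := lt_of_le_of_lt (Nat.zero_le _) hM
  have hsum := h.abs_sub_le b hb.le
  rw [hv]
  split_ifs with hib
  · rcases hib.lt_or_eq with hlt | rfl
    · refine lt_zero_iff_of_abs_sub_sum_le hM h.abs_slope_le hb.le hlt hzero (hne (by omega)) ?_
      have hN : (blockLen B M b : ℤ) ≤ blockLen B M (i₀ + 1) := by
        exact_mod_cast blockLen_antitone hM0 hlt
      have hr : (r : ℤ) + 1 ≤ blockLen B M b := by exact_mod_cast hrb
      have hεb : |ε b * (r + 1)| ≤ C * blockLen B M b := by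
        rw [abs_mul, abs_of_nonneg (by positivity : (0 : ℤ) ≤ r + 1)]
        exact mul_le_mul (h.abs_slope_le b) hr (by positivity) (by positivity)
      have h1 : (1 : ℤ) ≤ blockLen B M b := by exact_mod_cast blockLen_pos hM0 b
      calc _ = |(a b - ∑ i ∈ range b, ε i * blockLen B M i) + ε b * (r + 1)| := by ring_nf
        _ ≤ C + C * blockLen B M b := (abs_add_le _ _).trans (add_le_add hsum hεb)
        _ ≤ _ := by nlinarith
    · rw [sum_eq_zero fun i hi => by rw [hzero i (mem_range.1 hi), zero_mul], sub_zero] at hsum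
      have hCr : (C : ℤ) + 1 ≤ r + 1 := by exact_mod_cast Nat.succ_le_succ (hC rfl)
      have hεi : (1 : ℤ) ≤ |ε i₀| := Int.one_le_abs (hne hb)
      refine (lt_zero_iff_of_abs_sub_lt (y := ε i₀ * (r + 1)) ?_).trans
        (mul_neg_iff_of_pos (by positivity))
      rw [add_sub_cancel_right, abs_mul, abs_of_nonneg (by positivity : (0 : ℤ) ≤ r + 1)]
      nlinarith
  · rw [hzero b (by omega), zero_mul, add_zero]

lemma exists_isFormulaProfile (h : IsTermProfile B M C d v ε a) (hM : C * (B + 2) < M) :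
    ∃ E, IsFormulaProfile B M C d (fun p => decide (v p < 0)) E := by
  obtain ⟨i₀, hzero, hne⟩ := exists_first_ne_zero ε B
  have hi₀d : i₀ < B → i₀ ≤ d := fun hi => by
    by_contra hlt
    exact hne hi (h.slope_eq_zero_of_lt hi (by omega) hzero)
  refine ⟨fun b => decide (if i₀ ≤ b then ε i₀ < 0 else a b < 0), ⟨?_, ?_, ?_⟩⟩
  · intro b hb r hr hrb
    exact decide_eq_decide.2 (h.lt_zero_iff hM hzero hne hb hrb (h.eq_of_le b hb r hr hrb)
      fun _ => hr)
  · intro b hb hdb r hrb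
    refine decide_eq_decide.2 (h.lt_zero_iff hM hzero hne hb hrb
      (h.eq_of_depth_le b hb hdb.le r hrb) ?_)
    rintro rfl
    exact absurd (hi₀d hb) (by omega)
  · intro b hb hdb
    by_cases hib : i₀ ≤ b
    · simp [hib, show i₀ ≤ b + 2 by omega]
    · have hib₂ : ¬ i₀ ≤ b + 2 := fun hi => hib ((hi₀d (by omega)).trans hdb)
      have h₁ := h.offset_succ b (by omega) hdb
      have h₂ := h.offset_succ (b + 1) hb (by omega)
      rw [hzero b (by omega), zero_mul, add_zero] at h₁
      rw [hzero (b + 1) (by omega), zero_mul, add_zero] at h₂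
      simp only [hib, hib₂, if_false, h₂, h₁]

end IsTermProfile

def HasTermProfile (B d : ℕ) (v : ℕ → ℕ → ℕ) : Prop :=
  ∃ C, ∀ᶠ M in atTop, ∃ ε a, IsTermProfile B M C d (fun p => (v M p : ℤ)) ε a

def HasFormulaProfile (B d : ℕ) (f : ℕ → ℕ → Bool) : Prop :=
  ∃ C, ∀ᶠ M in atTop, ∃ E, IsFormulaProfile B M C d (f M) E

lemma HasTermProfile.one : HasTermProfile B 0 (fun _ _ => 1) :=
  ⟨1, .of_forall fun M => ⟨0, 1, {
    abs_slope_le := by simp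
    slope_eq_zero := by simp
    slope_add_two := by simp
    eq_of_le := by simp
    eq_of_depth_le := by simp
    abs_sub_le := by simp
    offset_succ := by simp }⟩⟩

lemma HasTermProfile.add {d₁ d₂ : ℕ} {v₁ v₂ : ℕ → ℕ → ℕ} (h₁ : HasTermProfile B d₁ v₁)
    (h₂ : HasTermProfile B d₂ v₂) :
    HasTermProfile B (max d₁ d₂) (fun M p => v₁ M p + v₂ M p) := by
  obtain ⟨C₁, h₁⟩ := h₁
  obtain ⟨C₂, h₂⟩ := h₂
  refine ⟨C₁ + C₂, (h₁.and h₂).mono ?_⟩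
  rintro M ⟨⟨ε₁, a₁, h₁⟩, ⟨ε₂, a₂, h₂⟩⟩
  have := (h₁.mono le_rfl (le_max_left d₁ d₂)).add (h₂.mono le_rfl (le_max_right d₁ d₂))
  exact ⟨_, _, by convert this using 1; ext p; simp⟩

lemma HasFormulaProfile.count {f : ℕ → ℕ → Bool} (h : HasFormulaProfile B d f) :
    HasTermProfile B (d + 1) (fun M p => Nat.count (fun j => f M j) (p + 1)) := by
  obtain ⟨C, h⟩ := h
  exact ⟨_, (h.and (eventually_ge_atTop C)).mono fun M ⟨⟨E, hE⟩, hCM⟩ => hE.count hCM⟩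

lemma HasFormulaProfile.lt {d₁ d₂ : ℕ} {v₁ v₂ : ℕ → ℕ → ℕ} (h₁ : HasTermProfile B d₁ v₁)
    (h₂ : HasTermProfile B d₂ v₂) :
    HasFormulaProfile B (max d₁ d₂) (fun M p => decide (v₁ M p < v₂ M p)) := by
  obtain ⟨C₁, h₁⟩ := h₁
  obtain ⟨C₂, h₂⟩ := h₂
  refine ⟨C₁ + C₂, ((h₁.and h₂).and (eventually_gt_atTop ((C₁ + C₂) * (B + 2)))).mono ?_⟩
  rintro M ⟨⟨⟨ε₁, a₁, h₁⟩, ⟨ε₂, a₂, h₂⟩⟩, hM⟩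
  beta_reduce
  have hdiff := (h₁.mono le_rfl (le_max_left d₁ d₂)).add (h₂.mono le_rfl (le_max_right d₁ d₂)).neg
  have hlt : (fun p => decide (v₁ M p < v₂ M p)) =
      fun p => decide (((fun p => (v₁ M p : ℤ)) + -fun p => (v₂ M p : ℤ)) p < 0) := by
    funext p
    simp [← sub_eq_add_neg]
  rw [hlt]
  exact hdiff.exists_isFormulaProfile hM

lemma HasFormulaProfile.sym (σ : Letter) :
    HasFormulaProfile B 0 (fun M => (TLFormula.sym σ).sat (testWord B M)) := by
  have hsym : ∀ M b r, b < B → r < blockLen B M b →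
      (TLFormula.sym σ).sat (testWord B M) (blockStart B M b + r) = decide (blockLetter b = σ) :=
    fun M b r hb hr => by simp [TLFormula.sat, getElem?_testWord hb hr]
  exact ⟨0, .of_forall fun M => ⟨fun b => decide (blockLetter b = σ), {
    eq_of_le := fun b hb r _ hr => hsym M b r hb hr
    eq_of_depth_lt := fun b hb _ r hr => hsym M b r hb hr
    add_two := fun b _ _ => by rw [blockLetter_add_two] }⟩⟩

lemma HasFormulaProfile.not {f : ℕ → ℕ → Bool} (h : HasFormulaProfile B d f) :
    HasFormulaProfile B d (fun M p => !f M p) := by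
  obtain ⟨C, h⟩ := h
  exact ⟨C, h.mono fun M ⟨E, hE⟩ => ⟨_, hE.not⟩⟩

lemma HasFormulaProfile.and {d₁ d₂ : ℕ} {f₁ f₂ : ℕ → ℕ → Bool} (h₁ : HasFormulaProfile B d₁ f₁)
    (h₂ : HasFormulaProfile B d₂ f₂) :
    HasFormulaProfile B (max d₁ d₂) (fun M p => f₁ M p && f₂ M p) := by
  obtain ⟨C₁, h₁⟩ := h₁
  obtain ⟨C₂, h₂⟩ := h₂
  exact ⟨C₁ + C₂, (h₁.and h₂).mono fun M ⟨⟨E₁, h₁⟩, ⟨E₂, h₂⟩⟩ =>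
    ⟨_, (h₁.mono (Nat.le_add_right _ _) (le_max_left d₁ d₂)).and
      (h₂.mono (Nat.le_add_left _ _) (le_max_right d₁ d₂))⟩⟩

end Profiles

mutual

theorem TLFormula.hasFormulaProfile (B : ℕ) :
    ∀ φ : TLFormula Letter, HasFormulaProfile B φ.depth (fun M => φ.sat (testWord B M))
  | .sym σ => HasFormulaProfile.sym σ
  | .lt t₁ t₂ => HasFormulaProfile.lt (t₁.hasTermProfile B) (t₂.hasTermProfile B)
  | .not φ => (φ.hasFormulaProfile B).not
  | .and φ₁ φ₂ => (φ₁.hasFormulaProfile B).and (φ₂.hasFormulaProfile B)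

theorem TLTerm.hasTermProfile (B : ℕ) :
    ∀ t : TLTerm Letter, HasTermProfile B t.depth (fun M => t.val (testWord B M))
  | .countL φ => by
    have := (φ.hasFormulaProfile B).count
    simp only [← TLTerm.val_countL] at this
    exact this
  | .add t₁ t₂ => (t₁.hasTermProfile B).add (t₂.hasTermProfile B)
  | .one => HasTermProfile.one

end

theorem not_solvesNTP_of_depth_add_three_le {B : ℕ} {φ : TLFormula Letter}
    (hφ : φ.depth + 3 ≤ B) : ¬ SolvesNTP φ B := by
  obtain ⟨k, rfl⟩ : ∃ k, B = k + 3 := ⟨B - 3, by omega⟩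
  obtain ⟨C, hC⟩ := φ.hasFormulaProfile (k + 3)
  obtain ⟨M, ⟨E, hE⟩, hCM⟩ := (hC.and (eventually_gt_atTop C)).exists
  have hM : 0 < M := by omega
  set W := testWord (k + 3) M
  have hW : W ∈ altplus (k + 3) := testWord_mem_altplus hM
  have hend : ∀ b < k + 3, 1 ≤ blockStart (k + 3) M (b + 1) ∧
      blockStart (k + 3) M (b + 1) ≤ W.length ∧
      φ.sat W (blockStart (k + 3) M (b + 1) - 1) = E b := by
    intro b hb
    have hN := le_blockLen (B := k + 3) (M := M) hb
    refine ⟨by rw [blockStart_succ]; omega, length_testWord ▸ blockStart_mono hb, ?_⟩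
    rw [blockStart_succ, show ∀ x, x + blockLen (k + 3) M b - 1 = x + (blockLen (k + 3) M b - 1)
      from fun x => by omega]
    exact hE.eq_of_le b hb _ (by omega) (by omega)
  rw [solvesNTP_iff]
  intro hsolves
  obtain ⟨h₁, h₂, hsat⟩ := hend k (by omega)
  obtain ⟨h₁', h₂', hsat₂⟩ := hend (k + 2) (by omega)
  have hfalse : E k = false := by
    rw [← hsat, ← Bool.not_eq_true, ← hsolves W hW _ h₁ h₂]
    exact fun hmem => absurd (eq_of_mem_altplus (take_testWord_mem_altplus hM (by omega)) hmem)
      (by omega)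
  have htrue : E (k + 2) = true := by
    rw [← hsat₂, ← hsolves W hW _ h₁' h₂']
    show W.take (blockStart (k + 3) M (k + 3)) ∈ _
    rwa [← length_testWord, List.take_length]
  rw [hE.add_two k (by omega) (by omega), hfalse] at htrue
  exact Bool.false_ne_true htrue

/-- For every `k > 0`, some TL[#←] formula of depth `k+1` solves the next-token
prediction problem for `L_{k+3}`, but no TL[#←] formula of depth `k` does. -/
theorem stmt10 (k : ℕ) (hk : 0 < k) :
    (∃ φ : TLFormula Letter, φ.depth ≤ k + 1 ∧ SolvesNTP φ (k + 3)) ∧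
    ¬(∃ φ : TLFormula Letter, φ.depth ≤ k ∧ SolvesNTP φ (k + 3)) :=
  ⟨⟨reach (k + 2), (depth_reach (k + 1)).le, reach_solvesNTP (k + 2)⟩,
    fun ⟨_, hφ, hsolves⟩ => not_solvesNTP_of_depth_add_three_le (by omega) hsolves⟩
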